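/- Let ψ be the probability generating function of a nonnegative-integer valued random variable Y with P(Y=0) > 0 and P(Y=0) + P(Y=1) < 1 and E[Y] ≤ 1, and let g be the power series solution with g(0)=0 of g(z) = zψ(g(z)). For t in (0, R_ψ) define ψ_t(z) = ψ(tz)/ψ(t) and let g_t solve g_t(z) = zψ_t(g_t(z)). Then g_t(z) = g(tz/ψ(t))/t for all |z| ≤ 1. -/

import Mathlib

open PowerSeries

/-- Composition ψ(g) of formal power series, valid when g has zero constant term. -/
noncomputable def psComp (ψ g : PowerSeries ℝ) : PowerSeries ℝ :=
  PowerSeries.mk fun n => ∑ k ∈ Finset.range (n + 1),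
    (PowerSeries.coeff k ψ) * (PowerSeries.coeff n (g ^ k))

/-! The series `h := C (1/t) * rescale (t/s) g` satisfies Lagrange's equation with data
`ψ_t = C (1/s) * rescale t ψ`, because scalar multiplication and rescaling of the inner series
of `psComp` can be moved onto the outer series. That equation has at most one solution: the
coefficient of `X^(n+1)` in `X * psComp ψ g` only involves the coefficients of `g` below `n+1`. -/

namespace PowerSeries

theorem coeff_pow_eq_of_trunc_eq {R : Type*} [CommSemiring R] {f₁ f₂ : R⟦X⟧} {n m : ℕ}
    (h : trunc n f₁ = trunc n f₂) (hm : m < n) (k : ℕ) :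
    coeff m (f₁ ^ k) = coeff m (f₂ ^ k) := by
  have hk : trunc n (f₁ ^ k) = trunc n (f₂ ^ k) := by
    rw [← trunc_trunc_pow, h, trunc_trunc_pow]
  simpa [coeff_trunc, hm] using congrArg (Polynomial.coeff · m) hk

theorem coeff_psComp (ψ g : ℝ⟦X⟧) (n : ℕ) :
    coeff n (psComp ψ g) = ∑ k ∈ Finset.range (n + 1), coeff k ψ * coeff n (g ^ k) :=
  coeff_mk _ _

theorem eq_of_eq_X_mul_psComp {ψ g₁ g₂ : ℝ⟦X⟧} (h₁ : g₁ = X * psComp ψ g₁)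
    (h₂ : g₂ = X * psComp ψ g₂) : g₁ = g₂ := by
  have htrunc : ∀ n, trunc n g₁ = trunc n g₂ := by
    intro n
    induction n with
    | zero => rfl
    | succ n ih =>
      rw [trunc_succ, trunc_succ, ih]
      congr 2
      cases n with
      | zero => rw [h₁, h₂]; simp
      | succ m =>
        rw [h₁, h₂, coeff_succ_X_mul, coeff_succ_X_mul, coeff_psComp, coeff_psComp]
        exact Finset.sum_congr rfl fun k _ => by
          rw [coeff_pow_eq_of_trunc_eq ih m.lt_succ_self]
  ext n
  simpa [coeff_trunc] using congrArg (Polynomial.coeff · n) (htrunc (n + 1))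

theorem psComp_rescale (ψ g : ℝ⟦X⟧) (c : ℝ) :
    psComp ψ (rescale c g) = rescale c (psComp ψ g) := by
  ext n
  simp only [coeff_psComp, coeff_rescale, ← map_pow, Finset.mul_sum, mul_left_comm]

theorem psComp_C_mul_right (ψ g : ℝ⟦X⟧) (a : ℝ) :
    psComp ψ (C a * g) = psComp (rescale a ψ) g := by
  ext n
  simp only [coeff_psComp, coeff_rescale, mul_pow, ← map_pow, coeff_C_mul, mul_assoc,
    mul_left_comm]

theorem psComp_C_mul_left (ψ g : ℝ⟦X⟧) (a : ℝ) :
    psComp (C a * ψ) g = C a * psComp ψ g := by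
  ext n
  simp only [coeff_psComp, coeff_C_mul, Finset.mul_sum, mul_assoc]

end PowerSeries

theorem stmt_11_general (b : ℕ → ℝ)
    (R t : ℝ) (ht : t ∈ Set.Ioo 0 R)
    (s : ℝ)
    (ψ ψt : PowerSeries ℝ)
    (hψ : ψ = PowerSeries.mk b)
    (hψt : ψt = PowerSeries.mk (fun n => b n * t ^ n / s))
    (g gt : PowerSeries ℝ)
    (hlag : g = PowerSeries.X * psComp ψ g)
    (hlagt : gt = PowerSeries.X * psComp ψt gt) :
    gt = PowerSeries.C (1 / t) * PowerSeries.rescale (t / s) g := by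
  have ht0 : t ≠ 0 := ht.1.ne'
  have hψt_eq : ψt = C (1 / s) * rescale t ψ := by
    ext n
    rw [hψt, hψ, coeff_C_mul, coeff_rescale, coeff_mk, coeff_mk]
    ring
  refine eq_of_eq_X_mul_psComp hlagt ?_
  conv_lhs => rw [hlag]
  rw [hψt_eq, psComp_C_mul_left, psComp_C_mul_right, rescale_rescale, mul_one_div_cancel ht0,
    rescale_one, RingHom.id_apply, psComp_rescale, map_mul, rescale_X]
  rw [← div_mul_div_cancel₀ (a := 1) (c := s) ht0, map_mul]
  ring

/-- Let ψ be the probability generating function of Y with P(Y=0) > 0,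
P(Y=0)+P(Y=1) < 1, E[Y] ≤ 1, and g the solution (with g(0)=0) of g = zψ(g).
For t ∈ (0, R_ψ) let ψ_t(z) = ψ(tz)/ψ(t) and let g_t solve g_t = zψ_t(g_t).
Then g_t(z) = g(tz/ψ(t))/t, i.e. g_t = (1/t)·(rescale by t/ψ(t) of g). -/
theorem stmt_11 (b : ℕ → ℝ) (hbnn : ∀ n, 0 ≤ b n)
    (hbsum : Summable b) (hbprob : (∑' n, b n) = 1)
    (hb0 : 0 < b 0) (hb01 : b 0 + b 1 < 1)
    (hmeansum : Summable (fun n : ℕ => (n : ℝ) * b n))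
    (hmean : (∑' n : ℕ, (n : ℝ) * b n) ≤ 1)
    (R t : ℝ) (ht : t ∈ Set.Ioo 0 R)
    (hsumt : Summable (fun n => b n * t ^ n))
    (s : ℝ) (hs : s = ∑' n, b n * t ^ n)
    (ψ ψt : PowerSeries ℝ)
    (hψ : ψ = PowerSeries.mk b)
    (hψt : ψt = PowerSeries.mk (fun n => b n * t ^ n / s))
    (g gt : PowerSeries ℝ)
    (hg0 : PowerSeries.constantCoeff g = 0)
    (hlag : g = PowerSeries.X * psComp ψ g)
    (hgt0 : PowerSeries.constantCoeff gt = 0)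
    (hlagt : gt = PowerSeries.X * psComp ψt gt) :
    gt = PowerSeries.C (1 / t) * PowerSeries.rescale (t / s) g :=
  stmt_11_general b R t ht s ψ ψt hψ hψt g gt hlag hlagt
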